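/- For f(x) = log(1 + L·(e^x − 1)) with L real, the third derivative of f at any x in the domain of f equals (1 − L)·L·(1 − L·(e^x + 1))·e^x / (1 + L·(e^x − 1))³. Consequently, for L > 1, the derivative f′(x) = L·e^x/(1 + L·(e^x − 1)) is strictly convex on the interval (log(1 − 1/L), ∞). -/

import Mathlib

/-!
Differentiate `log (1 + L (eᵗ - 1))` three times with the quotient rule on the open set where
its argument is positive. For `L > 1` this set is `(log (1 - 1/L), ∞)`, and there both factors
`1 - L` and `1 - L (eˣ + 1)` of the third derivative are negative, so the second derivative of
`f' = L eˣ / (1 + L (eˣ - 1))` is positive and `f'` is strictly convex.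
-/

open Real Set

section

variable (L : ℝ)

theorem hasDerivAt_one_add_mul_exp_sub_one (x : ℝ) :
    HasDerivAt (fun t => 1 + L * (exp t - 1)) (L * exp x) x :=
  (((hasDerivAt_exp x).sub_const 1).const_mul L).const_add 1

theorem isOpen_setOf_one_add_mul_exp_sub_one_pos : IsOpen {t : ℝ | 0 < 1 + L * (exp t - 1)} :=
  isOpen_lt continuous_const (by fun_prop)

variable {L}

theorem hasDerivAt_log_one_add_mul_exp_sub_one {x : ℝ} (h : 0 < 1 + L * (exp x - 1)) :
    HasDerivAt (fun t => log (1 + L * (exp t - 1))) (L * exp x / (1 + L * (exp x - 1))) x :=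
  (hasDerivAt_one_add_mul_exp_sub_one L x).log h.ne'

theorem hasDerivAt_mul_exp_div_one_add_mul_exp_sub_one {x : ℝ} (h : 0 < 1 + L * (exp x - 1)) :
    HasDerivAt (fun t => L * exp t / (1 + L * (exp t - 1)))
      ((1 - L) * L * exp x / (1 + L * (exp x - 1)) ^ 2) x := by
  refine (((hasDerivAt_exp x).const_mul L).div (hasDerivAt_one_add_mul_exp_sub_one L x)
    h.ne').congr_deriv ?_
  ring

theorem hasDerivAt_mul_exp_div_one_add_mul_exp_sub_one_sq {x : ℝ}
    (h : 0 < 1 + L * (exp x - 1)) :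
    HasDerivAt (fun t => (1 - L) * L * exp t / (1 + L * (exp t - 1)) ^ 2)
      ((1 - L) * L * (1 - L * (exp x + 1)) * exp x / (1 + L * (exp x - 1)) ^ 3) x := by
  refine (((hasDerivAt_exp x).const_mul ((1 - L) * L)).div
    ((hasDerivAt_one_add_mul_exp_sub_one L x).pow 2) (pow_ne_zero 2 h.ne')).congr_deriv ?_
  simp only [Pi.pow_apply]
  field_simp
  ring

theorem eqOn_iteratedDeriv_two_mul_exp_div_one_add_mul_exp_sub_one :
    EqOn (iteratedDeriv 2 fun t => L * exp t / (1 + L * (exp t - 1)))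
      (fun x => (1 - L) * L * (1 - L * (exp x + 1)) * exp x / (1 + L * (exp x - 1)) ^ 3)
      {t | 0 < 1 + L * (exp t - 1)} := by
  intro x hx
  have hderiv : EqOn (deriv fun t => L * exp t / (1 + L * (exp t - 1)))
      (fun t => (1 - L) * L * exp t / (1 + L * (exp t - 1)) ^ 2) {t | 0 < 1 + L * (exp t - 1)} :=
    fun _ hy => (hasDerivAt_mul_exp_div_one_add_mul_exp_sub_one hy).deriv
  rw [iteratedDeriv_succ',
    hderiv.iteratedDeriv_of_isOpen (isOpen_setOf_one_add_mul_exp_sub_one_pos L) 1 hx,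
    iteratedDeriv_one, (hasDerivAt_mul_exp_div_one_add_mul_exp_sub_one_sq hx).deriv]

theorem eqOn_iteratedDeriv_three_log_one_add_mul_exp_sub_one :
    EqOn (iteratedDeriv 3 fun t => log (1 + L * (exp t - 1)))
      (fun x => (1 - L) * L * (1 - L * (exp x + 1)) * exp x / (1 + L * (exp x - 1)) ^ 3)
      {t | 0 < 1 + L * (exp t - 1)} := by
  intro x hx
  have hderiv : EqOn (deriv fun t => log (1 + L * (exp t - 1)))
      (fun t => L * exp t / (1 + L * (exp t - 1))) {t | 0 < 1 + L * (exp t - 1)} :=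
    fun _ hy => (hasDerivAt_log_one_add_mul_exp_sub_one hy).deriv
  rw [iteratedDeriv_succ',
    hderiv.iteratedDeriv_of_isOpen (isOpen_setOf_one_add_mul_exp_sub_one_pos L) 2 hx]
  exact eqOn_iteratedDeriv_two_mul_exp_div_one_add_mul_exp_sub_one hx

theorem one_add_mul_exp_sub_one_pos {x : ℝ} (hL : 1 < L) (hx : log (1 - 1 / L) < x) :
    0 < 1 + L * (exp x - 1) := by
  have hL0 : 0 < L := by linarith
  have hexp : 1 - 1 / L < exp x :=
    (log_lt_iff_lt_exp (by rw [sub_pos, div_lt_one hL0]; exact hL)).1 hx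
  have hfactor : 1 + L * (exp x - 1) = L * (exp x - (1 - 1 / L)) := by field_simp; ring
  rw [hfactor]
  exact mul_pos hL0 (sub_pos.2 hexp)

theorem third_deriv_log_one_add_mul_exp_sub_one_pos {x : ℝ} (hL : 1 < L)
    (h : 0 < 1 + L * (exp x - 1)) :
    0 < (1 - L) * L * (1 - L * (exp x + 1)) * exp x / (1 + L * (exp x - 1)) ^ 3 := by
  have hL0 : 0 < L := by linarith
  have hsecond : 1 - L * (exp x + 1) < 0 := by nlinarith [exp_pos x]
  have hsign : 0 < (1 - L) * (1 - L * (exp x + 1)) := mul_pos_of_neg_of_neg (by linarith) hsecond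
  have hnum : 0 < (1 - L) * L * (1 - L * (exp x + 1)) * exp x := by
    rw [mul_right_comm (1 - L)]
    exact mul_pos (mul_pos hsign hL0) (exp_pos x)
  positivity

end

theorem stmt_10 :
    (∀ L x : ℝ, 0 < 1 + L * (Real.exp x - 1) →
      iteratedDeriv 3 (fun t => Real.log (1 + L * (Real.exp t - 1))) x =
        (1 - L) * L * (1 - L * (Real.exp x + 1)) * Real.exp x /
          (1 + L * (Real.exp x - 1)) ^ 3) ∧
    (∀ L : ℝ, 1 < L →
      (∀ x ∈ Set.Ioi (Real.log (1 - 1 / L)),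
        deriv (fun t => Real.log (1 + L * (Real.exp t - 1))) x =
          L * Real.exp x / (1 + L * (Real.exp x - 1))) ∧
      StrictConvexOn ℝ (Set.Ioi (Real.log (1 - 1 / L)))
        (fun x => L * Real.exp x / (1 + L * (Real.exp x - 1)))) := by
  refine ⟨fun L x h => eqOn_iteratedDeriv_three_log_one_add_mul_exp_sub_one h,
    fun L hL => ⟨fun x hx => ?_, ?_⟩⟩
  · exact (hasDerivAt_log_one_add_mul_exp_sub_one (one_add_mul_exp_sub_one_pos hL hx)).deriv
  · refine strictConvexOn_of_deriv2_pos (convex_Ioi _) (fun x hx => ?_) fun x hx => ?_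
    · exact (hasDerivAt_mul_exp_div_one_add_mul_exp_sub_one
        (one_add_mul_exp_sub_one_pos hL hx)).continuousAt.continuousWithinAt
    · rw [interior_Ioi] at hx
      have h := one_add_mul_exp_sub_one_pos hL hx
      rw [← iteratedDeriv_eq_iterate, eqOn_iteratedDeriv_two_mul_exp_div_one_add_mul_exp_sub_one h]
      exact third_deriv_log_one_add_mul_exp_sub_one_pos hL h
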